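/- Weight adaptation to a right-hand discontinuity (Proposition): let r ≥ 2, t = 2r−1, 1 ≤ l₀ ≤ r−1, L ≥ 0, and 0 < m ≤ M₀. There exist constants M > 0 and h₀ > 0, depending only on r, l₀, L, m, M₀, such that for every 0 < h < h₀, every x₀ ∈ ℝ, every integer j, and every f : ℝ → ℝ satisfying m ≤ |f(x_{j+l₀}) − f(x_{j+l₀−1})| ≤ M₀ and |f(x_{j+ξ}) − f(x_{j+ξ−1})| ≤ L·h for all ξ ≠ l₀ with −r+1 ≤ ξ ≤ r−1, the nonlinear weights satisfy |ω_k − C^{r+l₀-1}_{l₀-1,k}| ≤ M·h^{t} for 0 ≤ k ≤ l₀−1, and 0 ≤ ω_k ≤ M·h^{t} for l₀ ≤ k ≤ r−1. -/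

import Mathlib

/-- The node `x_m = x₀ + m·h`. -/
noncomputable def nd (h x₀ : ℝ) (m : ℤ) : ℝ := x₀ + (m : ℝ) * h

/-- Value at the midpoint `x₀ + (j - 1/2)·h` of the Lagrange interpolant of `f`
at the `a+1` equally spaced nodes `x_{j+b-a}, …, x_{j+b}` where `x_m = x₀ + m·h`. -/
noncomputable def Pval (h x₀ : ℝ) (j a b : ℤ) (f : ℝ → ℝ) : ℝ :=
  (Lagrange.interpolate (Finset.Icc (j + b - a) (j + b)) (fun m : ℤ => x₀ + (m : ℝ) * h)
    (fun m : ℤ => f (x₀ + (m : ℝ) * h))).eval (x₀ + ((j : ℝ) - 1 / 2) * h)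

/-- The classical optimal weights `C^{2r-1}_{r-1,k} = 2^{-(2r-1)} · C(2r, 2k+1)`. -/
noncomputable def Copt (r k : ℕ) : ℝ :=
  (1 / 2 ^ (2 * r - 1)) * (Nat.choose (2 * r) (2 * k + 1) : ℝ)

/-- The general optimal weights `C^{r+l-1}_{l-1,k}`, for `1 ≤ l ≤ r` and `0 ≤ k ≤ l-1`. -/
noncomputable def C1 (r l k : ℕ) : ℝ :=
  (1 / 2 ^ (2 * l)) * (((r : ℝ) + (l : ℝ)) / (l : ℝ)) *
    (((l : ℝ) - (k : ℝ)) / ((r : ℝ) - (k : ℝ))) *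
    (Nat.choose l k : ℝ) * ((Nat.choose r k : ℝ))⁻¹ * (Nat.choose (2 * l) l : ℝ) *
    ((Nat.choose (l + r) r : ℝ))⁻¹ * (Nat.choose (2 * r) (2 * k + 1) : ℝ)

/-- The smoothness indicators `J_ξ = |f(x_{j+ξ}) − f(x_{j+ξ-1})|^{2t}` with `t = 2r-1`. -/
noncomputable def Jf (h x₀ : ℝ) (j : ℤ) (r : ℕ) (f : ℝ → ℝ) (ξ : ℤ) : ℝ :=
  |f (nd h x₀ (j + ξ)) - f (nd h x₀ (j + ξ - 1))| ^ (2 * (2 * r - 1))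

/-- The nonlinear weight numerators
`α_k = C^{2r-1}_{r-1,k} + h^{-(2r-1)}·(Σ_{l=k+1}^{r-1} C^{r+l-1}_{l-1,k} J_l
  + Σ_{l=0}^{k-1} C^{2r-l-2}_{r-1,k} J_{l-r+1})`,
where the reflected weight `C^{2r-l-2}_{r-1,k}` equals `C1 r (r-l-1) (r-1-k)`. -/
noncomputable def alphaW (h x₀ : ℝ) (j : ℤ) (r : ℕ) (f : ℝ → ℝ) (k : ℕ) : ℝ :=
  Copt r k + (h ^ (2 * r - 1))⁻¹ *
    ((∑ l ∈ Finset.Icc (k + 1) (r - 1), C1 r l k * Jf h x₀ j r f (l : ℤ)) +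
      ∑ l ∈ Finset.range k, C1 r (r - l - 1) (r - 1 - k) * Jf h x₀ j r f ((l : ℤ) - (r : ℤ) + 1))

/-- The nonlinear weights `ω_k = α_k / (α_0 + ⋯ + α_{r-1})`. -/
noncomputable def omegaW (h x₀ : ℝ) (j : ℤ) (r : ℕ) (f : ℝ → ℝ) (k : ℕ) : ℝ :=
  alphaW h x₀ j r f k / ∑ i ∈ Finset.range r, alphaW h x₀ j r f i

/-!
With `t = 2r - 1`, the jump indicator gives `A = h^{-t} J_{l₀} ≥ m^{2t} h^{-t}`, while every
other indicator is at most `(Lh)^{2t}`, so its contribution to `α_k` is `O(h^t)`. Hence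
`α_k = c_k A + B_k` with `c_k = C^{r+l₀-1}_{l₀-1,k}` for `k < l₀`, `c_k = 0` otherwise, and
`0 ≤ B_k = O(1)`. As the `c_k` are nonnegative with sum `1`,
`ω_k - c_k = (B_k - c_k ΣB) / (A + ΣB) = O(1/A) = O(h^t)`.

The normalization `Σ_{k<l} C^{r+l-1}_{l-1,k} = 1` becomes, after clearing factorials,
`Σ_{k<l} C(r-1-k, r-l) C(2r, 2k+1) = 2^{2l} l (l+r-1)! / ((2l)! (r-l)!)`, which follows by
induction on `l` from a first-order recurrence in `l` with a Wilf–Zeilberger certificate.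
-/

open Finset Nat

theorem C1_mul_eq (r l k : ℕ) (hkl : k < l) (hlr : l ≤ r) :
    C1 r l k * (2 ^ (2 * l) * l * (l + r - 1)! : ℝ) =
      (2 * l)! * (r - l)! * ((r - 1 - k).choose (r - l) * (2 * r).choose (2 * k + 1) : ℝ) := by
  obtain ⟨a, rfl⟩ : ∃ a, l = k + 1 + a := ⟨l - 1 - k, by omega⟩
  obtain ⟨d, rfl⟩ : ∃ d, r = k + 1 + a + d := ⟨r - (k + 1 + a), by omega⟩
  rw [show k + 1 + a + d - 1 - k = a + d by omega, show k + 1 + a + d - (k + 1 + a) = d by omega,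
    show k + 1 + a + (k + 1 + a + d) - 1 = 2 * k + 2 * a + d + 1 by omega]
  have e1 : ((k + 1 + a : ℕ) : ℝ) - k = a + 1 := by push_cast; ring
  have e2 : ((k + 1 + a + d : ℕ) : ℝ) - k = a + d + 1 := by push_cast; ring
  rw [C1, e1, e2, Nat.cast_choose ℝ (show k ≤ k + 1 + a by omega),
    Nat.cast_choose ℝ (show k ≤ k + 1 + a + d by omega),
    Nat.cast_choose ℝ (show k + 1 + a ≤ 2 * (k + 1 + a) by omega),
    Nat.cast_choose ℝ (show k + 1 + a + d ≤ k + 1 + a + (k + 1 + a + d) by omega),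
    Nat.cast_choose ℝ (show d ≤ a + d by omega),
    show k + 1 + a - k = a + 1 by omega, show k + 1 + a + d - k = a + d + 1 by omega,
    show 2 * (k + 1 + a) - (k + 1 + a) = k + 1 + a by omega,
    show k + 1 + a + (k + 1 + a + d) - (k + 1 + a + d) = k + 1 + a by omega,
    show a + d - d = a by omega,
    show k + 1 + a + (k + 1 + a + d) = 2 * k + 2 * a + d + 1 + 1 by omega,
    Nat.factorial_succ (2 * k + 2 * a + d + 1), Nat.factorial_succ a,
    Nat.factorial_succ (a + d)]
  have := (k + 1 + a).factorial_pos
  have := (k + 1 + a + d).factorial_pos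
  have := k.factorial_pos
  have := a.factorial_pos
  have := (2 * k + 2 * a + d + 1).factorial_pos
  field_simp
  push_cast
  ring

noncomputable def oddChooseSum (r l : ℕ) : ℝ :=
  ∑ k ∈ range l, ((r - 1 - k).choose (r - l) * (2 * r).choose (2 * k + 1) : ℝ)

/-- The WZ certificate of the recurrence `oddChooseSum_succ`, evaluated at `l = k + 1 + a`,
`r = l + 1 + d`: the summand difference equals `G k - G (k + 1)` for
`G k = k (2k + 1) C(r - 1 - k, r - l - 1) C(2r, 2k + 1)`. -/
theorem oddChooseSum_certificate (k a d : ℕ) :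
    ((k + 1 + a) * (2 * (k + 1 + a) + 1) * (a + d + 1).choose d
        - 2 * ((k + 1 + a) + (k + a + d + 2)) * (d + 1) * (a + d + 1).choose (d + 1) : ℝ) *
        (2 * (k + a + d + 2)).choose (2 * k + 1) =
      k * (2 * k + 1) * (a + d + 1).choose d * (2 * (k + a + d + 2)).choose (2 * k + 1)
        - (k + 1) * (2 * k + 3) * (a + d).choose d * (2 * (k + a + d + 2)).choose (2 * k + 3) := by
  rw [Nat.cast_choose ℝ (show d ≤ a + d + 1 by omega),
    Nat.cast_choose ℝ (show d + 1 ≤ a + d + 1 by omega),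
    Nat.cast_choose ℝ (show d ≤ a + d by omega),
    Nat.cast_choose ℝ (show 2 * k + 1 ≤ 2 * (k + a + d + 2) by omega),
    Nat.cast_choose ℝ (show 2 * k + 3 ≤ 2 * (k + a + d + 2) by omega),
    show a + d + 1 - d = a + 1 by omega, show a + d + 1 - (d + 1) = a by omega,
    show a + d - d = a by omega,
    show 2 * (k + a + d + 2) - (2 * k + 1) = 2 * a + 2 * d + 3 by omega,
    show 2 * (k + a + d + 2) - (2 * k + 3) = 2 * a + 2 * d + 1 by omega,
    Nat.factorial_succ (a + d), Nat.factorial_succ a, Nat.factorial_succ d,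
    show 2 * k + 3 = 2 * k + 1 + 1 + 1 by omega, Nat.factorial_succ (2 * k + 1 + 1),
    Nat.factorial_succ (2 * k + 1),
    show 2 * a + 2 * d + 3 = 2 * a + 2 * d + 1 + 1 + 1 by omega,
    Nat.factorial_succ (2 * a + 2 * d + 1 + 1), Nat.factorial_succ (2 * a + 2 * d + 1)]
  have := a.factorial_pos
  have := d.factorial_pos
  have := (a + d).factorial_pos
  have := (2 * k + 1).factorial_pos
  have := (2 * a + 2 * d + 1).factorial_pos
  field_simp
  push_cast
  ring

theorem oddChooseSum_succ (r l : ℕ) (hlr : l < r) :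
    l * (2 * l + 1) * oddChooseSum r (l + 1) = 2 * (l + r) * (r - l : ℕ) * oddChooseSum r l := by
  set G : ℕ → ℝ := fun k ↦
    k * (2 * k + 1) * (r - 1 - k).choose (r - (l + 1)) * (2 * r).choose (2 * k + 1) with hG
  have hG_last : G (l + 1) = 0 := by
    rcases Nat.lt_or_ge (l + 1) r with h | h
    · simp [hG, Nat.choose_eq_zero_of_lt (show r - 1 - (l + 1) < r - (l + 1) by omega)]
    · simp [hG, Nat.choose_eq_zero_of_lt (show 2 * r < 2 * (l + 1) + 1 by omega)]
  have htop : ((r - 1 - l).choose (r - l) : ℝ) = 0 := by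
    rw [Nat.choose_eq_zero_of_lt (by omega), Nat.cast_zero]
  have hterm : ∀ k ∈ range (l + 1),
      l * (2 * l + 1) * ((r - 1 - k).choose (r - (l + 1)) * (2 * r).choose (2 * k + 1) : ℝ)
        - 2 * (l + r) * (r - l : ℕ) * ((r - 1 - k).choose (r - l) * (2 * r).choose (2 * k + 1))
        = G k - G (k + 1) := by
    intro k hk
    rcases Nat.lt_or_ge k l with hkl | hkl
    · obtain ⟨a, rfl⟩ : ∃ a, l = k + 1 + a := ⟨l - 1 - k, by omega⟩
      obtain ⟨d, rfl⟩ : ∃ d, r = k + a + d + 2 := ⟨r - (k + a + 2), by omega⟩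
      simp only [hG]
      rw [show k + a + d + 2 - 1 - k = a + d + 1 by omega,
        show k + a + d + 2 - (k + 1 + a + 1) = d by omega,
        show k + a + d + 2 - (k + 1 + a) = d + 1 by omega,
        show k + a + d + 2 - 1 - (k + 1) = a + d by omega,
        show 2 * (k + 1) + 1 = 2 * k + 3 by omega]
      push_cast
      linear_combination oddChooseSum_certificate k a d
    · obtain rfl : k = l := by simp only [mem_range] at hk; omega
      rw [htop, hG_last]
      ring
  have hsucc : ∑ k ∈ range (l + 1),
      ((r - 1 - k).choose (r - l) * (2 * r).choose (2 * k + 1) : ℝ) = oddChooseSum r l := by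
    rw [sum_range_succ, htop, zero_mul, add_zero, oddChooseSum]
  have hG_zero : G 0 = 0 := by simp [hG]
  have hsum := Finset.sum_congr rfl hterm
  rw [sum_range_sub', hG_zero, hG_last, sum_sub_distrib, ← mul_sum, ← mul_sum, hsucc] at hsum
  rw [oddChooseSum]
  linarith

theorem oddChooseSum_mul_eq (r l : ℕ) (hl : 1 ≤ l) (hlr : l ≤ r) :
    (2 * l)! * (r - l)! * oddChooseSum r l = 2 ^ (2 * l) * l * (l + r - 1)! := by
  induction l, hl using Nat.le_induction with
  | base =>
    obtain ⟨n, rfl⟩ : ∃ n, r = n + 1 := ⟨r - 1, by omega⟩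
    simp only [oddChooseSum, range_one, sum_singleton, add_tsub_cancel_right, tsub_zero,
      choose_self, choose_one_right, factorial_succ, factorial_zero, cast_one, cast_mul, cast_add,
      cast_ofNat, add_tsub_cancel_left, mul_one, mul_zero, one_mul, zero_add, reduceAdd]
    ring
  | succ l hl ih =>
    obtain ⟨n, rfl⟩ : ∃ n, r = l + 1 + n := ⟨r - (l + 1), by omega⟩
    have hrec := oddChooseSum_succ (l + 1 + n) l (by omega)
    have ih := ih (by omega)
    rw [show l + 1 + n - l = n + 1 by omega] at hrec ih
    rw [show l + (l + 1 + n) - 1 = 2 * l + n by omega] at ih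
    rw [show l + 1 + n - (l + 1) = n by omega,
      show l + 1 + (l + 1 + n) - 1 = 2 * l + n + 1 by omega,
      show 2 * (l + 1) = 2 * l + 1 + 1 by ring,
      Nat.factorial_succ (2 * l + 1), Nat.factorial_succ (2 * l), Nat.factorial_succ (2 * l + n)]
    rw [Nat.factorial_succ n] at ih
    have hl0 : (l * (2 * l + 1) : ℝ) ≠ 0 := by positivity
    refine mul_left_cancel₀ hl0 ?_
    push_cast at hrec ih ⊢
    linear_combination ((2 * l + 2) * (2 * l + 1) * (2 * l)! * n ! : ℝ) * hrec
      + ((2 * l + 2) * (2 * l + 1) * 2 * (2 * l + n + 1) : ℝ) * ih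

theorem sum_C1_eq_one (r l : ℕ) (hl : 1 ≤ l) (hlr : l ≤ r) :
    ∑ k ∈ range l, C1 r l k = 1 := by
  have hX : (2 ^ (2 * l) * l * (l + r - 1)! : ℝ) ≠ 0 := by
    have : (l : ℝ) ≠ 0 := by exact_mod_cast (show l ≠ 0 by omega)
    positivity
  refine mul_right_cancel₀ hX ?_
  rw [sum_mul, sum_congr rfl fun k hk ↦ C1_mul_eq r l k (mem_range.1 hk) hlr, ← mul_sum,
    ← oddChooseSum, oddChooseSum_mul_eq r l hl hlr, one_mul]

theorem C1_nonneg {r l k : ℕ} (hkl : k < l) (hlr : l ≤ r) : 0 ≤ C1 r l k := by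
  refine nonneg_of_mul_nonneg_left (b := (2 ^ (2 * l) * l * (l + r - 1)! : ℝ)) ?_ ?_
  · rw [C1_mul_eq r l k hkl hlr]
    positivity
  · have : (0 : ℝ) < l := by exact_mod_cast (show 0 < l by omega)
    positivity

theorem C1_le_one {r l k : ℕ} (hkl : k < l) (hlr : l ≤ r) : C1 r l k ≤ 1 :=
  sum_C1_eq_one r l (by omega) hlr ▸
    single_le_sum (fun i hi ↦ C1_nonneg (mem_range.1 hi) hlr) (mem_range.2 hkl)

theorem Copt_le_two (r k : ℕ) : Copt r k ≤ 2 := by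
  have hpow : (2 ^ (2 * r) : ℝ) ≤ 2 ^ (2 * r - 1) * 2 :=
    pow_succ (2 : ℝ) _ ▸ pow_le_pow_right₀ one_le_two (by omega)
  have hchoose : ((2 * r).choose (2 * k + 1) : ℝ) ≤ 2 ^ (2 * r) := by
    exact_mod_cast Nat.choose_le_two_pow _ _
  rw [Copt, one_div_mul_eq_div, div_le_iff₀ (by positivity)]
  linarith

theorem abs_div_sum_sub_le {ι : Type*} {s : Finset ι} {α c B : ι → ℝ} {A K : ℝ}
    (hA : 0 < A) (hα : ∀ i ∈ s, α i = c i * A + B i) (hc : ∀ i ∈ s, 0 ≤ c i)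
    (hc_sum : ∑ i ∈ s, c i = 1) (hB : ∀ i ∈ s, 0 ≤ B i) (hBK : ∀ i ∈ s, B i ≤ K) {k : ι}
    (hk : k ∈ s) :
    |α k / ∑ i ∈ s, α i - c k| ≤ #s * K / A := by
  set SB := ∑ i ∈ s, B i
  have hS : ∑ i ∈ s, α i = A + SB := by
    rw [sum_congr rfl hα, sum_add_distrib, ← sum_mul, hc_sum, one_mul]
  have hSB : 0 ≤ SB := sum_nonneg hB
  have hSBK : SB ≤ #s * K := by simpa using sum_le_card_nsmul s B K hBK
  have hK : K ≤ #s * K := le_mul_of_one_le_left ((hB k hk).trans (hBK k hk))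
    (by exact_mod_cast card_pos.2 ⟨k, hk⟩)
  have hck : c k ≤ 1 := hc_sum ▸ single_le_sum hc hk
  have hnum : |B k - c k * SB| ≤ #s * K :=
    abs_sub_le_of_nonneg_of_le (hB k hk) ((hBK k hk).trans hK) (mul_nonneg (hc k hk) hSB)
      ((mul_le_of_le_one_left hSB hck).trans hSBK)
  have hpos : 0 < A + SB := by linarith
  calc |α k / ∑ i ∈ s, α i - c k| = |B k - c k * SB| / (A + SB) := by
        rw [hS, hα k hk, div_sub' hpos.ne', abs_div, abs_of_pos hpos]
        congr 2
        ring
    _ ≤ #s * K / (A + SB) := div_le_div_of_nonneg_right hnum hpos.le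
    _ ≤ #s * K / A := div_le_div_of_nonneg_left ((abs_nonneg _).trans hnum) hA (by linarith)

noncomputable def alphaOn (h x₀ : ℝ) (j : ℤ) (r : ℕ) (f : ℝ → ℝ) (s : Finset ℕ) (k : ℕ) :
    ℝ :=
  Copt r k + (h ^ (2 * r - 1))⁻¹ *
    ((∑ l ∈ s, C1 r l k * Jf h x₀ j r f (l : ℤ)) +
      ∑ l ∈ range k, C1 r (r - l - 1) (r - 1 - k) * Jf h x₀ j r f ((l : ℤ) - (r : ℤ) + 1))

section Weights

variable {h x₀ : ℝ} {j : ℤ} {r : ℕ} {f : ℝ → ℝ}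

theorem alphaW_eq_alphaOn (k : ℕ) :
    alphaW h x₀ j r f k = alphaOn h x₀ j r f (Icc (k + 1) (r - 1)) k := rfl

theorem Jf_nonneg (ξ : ℤ) : 0 ≤ Jf h x₀ j r f ξ := by
  unfold Jf
  positivity

theorem Jf_le {L : ℝ} {ξ : ℤ}
    (hξ : |f (nd h x₀ (j + ξ)) - f (nd h x₀ (j + ξ - 1))| ≤ L * h) :
    Jf h x₀ j r f ξ ≤ L ^ (2 * (2 * r - 1)) * h ^ (2 * (2 * r - 1)) :=
  mul_pow L h _ ▸ pow_le_pow_left₀ (abs_nonneg _) hξ _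

theorem alphaOn_nonneg {s : Finset ℕ} {k : ℕ} (hh : 0 < h) (hs : s ⊆ Icc (k + 1) (r - 1))
    (hk : k < r) : 0 ≤ alphaOn h x₀ j r f s k := by
  have hright : ∀ l ∈ s, 0 ≤ C1 r l k * Jf h x₀ j r f l := fun l hl ↦
    have hl := mem_Icc.1 (hs hl)
    mul_nonneg (C1_nonneg (by omega) (by omega)) (Jf_nonneg _)
  have hleft : ∀ l ∈ range k,
      0 ≤ C1 r (r - l - 1) (r - 1 - k) * Jf h x₀ j r f (l - r + 1) := fun l hl ↦
    have hl := mem_range.1 hl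
    mul_nonneg (C1_nonneg (by omega) (by omega)) (Jf_nonneg _)
  have hCopt : 0 ≤ Copt r k := by
    unfold Copt
    positivity
  exact add_nonneg hCopt <|
    mul_nonneg (by positivity) (add_nonneg (sum_nonneg hright) (sum_nonneg hleft))

theorem alphaOn_le {L : ℝ} {l₀ : ℕ} {s : Finset ℕ} {k : ℕ} (hh : 0 < h) (hh1 : h ≤ 1)
    (hs : s ⊆ Icc (k + 1) (r - 1)) (hl₀s : l₀ ∉ s) (hk : k < r)
    (hsmooth : ∀ ξ : ℤ, ξ ≠ (l₀ : ℤ) → -(r : ℤ) + 1 ≤ ξ → ξ ≤ (r : ℤ) - 1 →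
        |f (nd h x₀ (j + ξ)) - f (nd h x₀ (j + ξ - 1))| ≤ L * h) :
    alphaOn h x₀ j r f s k ≤ 2 + 2 * r * L ^ (2 * (2 * r - 1)) := by
  set t := 2 * r - 1
  have hLt : 0 ≤ L ^ (2 * t) := Even.pow_nonneg (even_two_mul t) L
  have hterm : ∀ ξ : ℤ, ∀ c : ℝ, ξ ≠ l₀ → -(r : ℤ) + 1 ≤ ξ → ξ ≤ (r : ℤ) - 1 →
      0 ≤ c → c ≤ 1 → c * Jf h x₀ j r f ξ ≤ L ^ (2 * t) * h ^ (2 * t) := fun ξ c hξ h₁ h₂ hc hc1 ↦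
    (mul_le_of_le_one_left (Jf_nonneg _) hc1).trans (Jf_le (hsmooth ξ hξ h₁ h₂))
  have hright : ∑ l ∈ s, C1 r l k * Jf h x₀ j r f l ≤ r * (L ^ (2 * t) * h ^ (2 * t)) := by
    have hcard : #s ≤ r := (card_le_card hs).trans (by rw [Nat.card_Icc]; omega)
    refine (sum_le_card_nsmul _ _ (L ^ (2 * t) * h ^ (2 * t)) fun l hl ↦ ?_).trans ?_
    · have hl' := mem_Icc.1 (hs hl)
      exact hterm l _ (fun he ↦ hl₀s (Nat.cast_injective he ▸ hl)) (by omega) (by omega)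
        (C1_nonneg (by omega) (by omega)) (C1_le_one (by omega) (by omega))
    · rw [nsmul_eq_mul]
      gcongr
  have hleft : ∑ l ∈ range k, C1 r (r - l - 1) (r - 1 - k) * Jf h x₀ j r f (l - r + 1)
      ≤ r * (L ^ (2 * t) * h ^ (2 * t)) := by
    refine (sum_le_card_nsmul _ _ (L ^ (2 * t) * h ^ (2 * t)) fun l hl ↦ ?_).trans ?_
    · have hl' := mem_range.1 hl
      exact hterm _ _ (by omega) (by omega) (by omega)
        (C1_nonneg (by omega) (by omega)) (C1_le_one (by omega) (by omega))
    · rw [nsmul_eq_mul, card_range]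
      gcongr
  have hht : 0 < h ^ t := pow_pos hh t
  calc alphaOn h x₀ j r f s k
      ≤ 2 + (h ^ t)⁻¹ * (2 * r * (L ^ (2 * t) * h ^ (2 * t))) := by
        unfold alphaOn
        gcongr
        · exact Copt_le_two r k
        · linarith
    _ = 2 + 2 * r * L ^ (2 * t) * h ^ t := by
        rw [show h ^ (2 * t) = h ^ t * h ^ t by rw [two_mul, pow_add]]
        field_simp
    _ ≤ 2 + 2 * r * L ^ (2 * t) := by
        grw [pow_le_one₀ hh.le hh1, mul_one]

theorem alphaW_nonneg {k : ℕ} (hh : 0 < h) (hk : k < r) : 0 ≤ alphaW h x₀ j r f k :=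
  alphaOn_nonneg hh subset_rfl hk

theorem omegaW_nonneg {k : ℕ} (hh : 0 < h) (hk : k < r) : 0 ≤ omegaW h x₀ j r f k :=
  div_nonneg (alphaW_nonneg hh hk) (sum_nonneg fun _ hi ↦ alphaW_nonneg hh (mem_range.1 hi))

theorem alphaW_eq_mul_add_alphaOn {l₀ k : ℕ} (hl₀ : l₀ ≤ r - 1) :
    alphaW h x₀ j r f k =
      (if k < l₀ then C1 r l₀ k else 0) * ((h ^ (2 * r - 1))⁻¹ * Jf h x₀ j r f l₀) +
        alphaOn h x₀ j r f ((Icc (k + 1) (r - 1)).erase l₀) k := by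
  rw [alphaW_eq_alphaOn]
  split_ifs with hk
  · rw [alphaOn, alphaOn, ← add_sum_erase _ _ (mem_Icc.2 ⟨hk, hl₀⟩)]
    ring
  · rw [erase_eq_of_notMem (by simp only [mem_Icc]; omega), zero_mul, zero_add]

theorem sum_ite_C1_eq_one {l₀ : ℕ} (hl₀1 : 1 ≤ l₀) (hl₀2 : l₀ ≤ r) :
    ∑ i ∈ range r, (if i < l₀ then C1 r l₀ i else 0) = 1 := by
  have hfilter : {i ∈ range r | i < l₀} = range l₀ := by
    ext
    simp only [mem_filter, mem_range]
    omega
  rw [← sum_filter, hfilter]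
  exact sum_C1_eq_one r l₀ hl₀1 hl₀2

theorem abs_omegaW_sub_le {L m : ℝ} {l₀ k : ℕ} (hl₀1 : 1 ≤ l₀) (hl₀2 : l₀ ≤ r - 1)
    (hm : 0 < m) (hh : 0 < h) (hh1 : h ≤ 1)
    (hjump : m ≤ |f (nd h x₀ (j + l₀)) - f (nd h x₀ (j + l₀ - 1))|)
    (hsmooth : ∀ ξ : ℤ, ξ ≠ (l₀ : ℤ) → -(r : ℤ) + 1 ≤ ξ → ξ ≤ (r : ℤ) - 1 →
        |f (nd h x₀ (j + ξ)) - f (nd h x₀ (j + ξ - 1))| ≤ L * h) (hk : k < r) :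
    |omegaW h x₀ j r f k - (if k < l₀ then C1 r l₀ k else 0)| ≤
      r * (2 + 2 * r * L ^ (2 * (2 * r - 1))) / m ^ (2 * (2 * r - 1)) * h ^ (2 * r - 1) := by
  set t := 2 * r - 1
  have hA : m ^ (2 * t) / h ^ t ≤ (h ^ t)⁻¹ * Jf h x₀ j r f l₀ := by
    rw [div_eq_inv_mul, Jf]
    gcongr
  have hA_pos : 0 < m ^ (2 * t) / h ^ t := by positivity
  have hK : 0 ≤ 2 + 2 * r * L ^ (2 * t) := by
    have := Even.pow_nonneg (even_two_mul t) L
    positivity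
  calc |omegaW h x₀ j r f k - (if k < l₀ then C1 r l₀ k else 0)|
      ≤ #(range r) * (2 + 2 * r * L ^ (2 * t)) / ((h ^ t)⁻¹ * Jf h x₀ j r f l₀) :=
        abs_div_sum_sub_le (hA_pos.trans_le hA) (fun _ _ ↦ alphaW_eq_mul_add_alphaOn hl₀2)
          (fun i _ ↦ by split_ifs with hi; exacts [C1_nonneg hi (by omega), le_rfl])
          (sum_ite_C1_eq_one hl₀1 (by omega))
          (fun i hi ↦ alphaOn_nonneg hh (erase_subset _ _) (mem_range.1 hi))
          (fun i hi ↦ alphaOn_le hh hh1 (erase_subset _ _) (notMem_erase _ _) (mem_range.1 hi)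
            hsmooth) (mem_range.2 hk)
    _ ≤ r * (2 + 2 * r * L ^ (2 * t)) / (m ^ (2 * t) / h ^ t) := by
        rw [card_range]
        gcongr
    _ = r * (2 + 2 * r * L ^ (2 * t)) / m ^ (2 * t) * h ^ t := by
        field_simp

end Weights

theorem weights_right_discontinuity_general (r : ℕ) (l₀ : ℕ) (hl₀1 : 1 ≤ l₀)
    (hl₀2 : l₀ ≤ r - 1) (L m M₀ : ℝ) (hm : 0 < m) :
    ∃ M > 0, ∃ h₀ > 0, ∀ h : ℝ, 0 < h → h < h₀ → ∀ x₀ : ℝ, ∀ j : ℤ, ∀ f : ℝ → ℝ,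
      m ≤ |f (nd h x₀ (j + l₀)) - f (nd h x₀ (j + l₀ - 1))| →
      |f (nd h x₀ (j + l₀)) - f (nd h x₀ (j + l₀ - 1))| ≤ M₀ →
      (∀ ξ : ℤ, ξ ≠ (l₀ : ℤ) → -(r : ℤ) + 1 ≤ ξ → ξ ≤ (r : ℤ) - 1 →
        |f (nd h x₀ (j + ξ)) - f (nd h x₀ (j + ξ - 1))| ≤ L * h) →
      (∀ k : ℕ, k ≤ l₀ - 1 →
        |omegaW h x₀ j r f k - C1 r l₀ k| ≤ M * h ^ (2 * r - 1)) ∧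
      (∀ k : ℕ, l₀ ≤ k → k ≤ r - 1 →
        0 ≤ omegaW h x₀ j r f k ∧ omegaW h x₀ j r f k ≤ M * h ^ (2 * r - 1)) := by
  have hr : (0 : ℝ) < r := by exact_mod_cast (show 0 < r by omega)
  have hL := Even.pow_nonneg (even_two_mul (2 * r - 1)) L
  refine ⟨r * (2 + 2 * r * L ^ (2 * (2 * r - 1))) / m ^ (2 * (2 * r - 1)), by positivity, 1,
    one_pos, fun h hh hh1 x₀ j f hjump _ hsmooth ↦ ?_⟩
  have hbound (k : ℕ) (hk : k < r) :=
    abs_omegaW_sub_le hl₀1 hl₀2 hm hh hh1.le hjump hsmooth hk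
  refine ⟨fun k hk ↦ ?_, fun k hk₁ hk₂ ↦ ⟨omegaW_nonneg hh (by omega), ?_⟩⟩
  · simpa only [if_pos (show k < l₀ by omega)] using hbound k (by omega)
  · simpa only [if_neg (show ¬k < l₀ by omega), sub_zero] using
      (le_abs_self _).trans (hbound k (by omega))

/-- Weight adaptation to a right-hand discontinuity at `[x_{j+l₀-1}, x_{j+l₀}]`:
the weights tend to the `(r+l₀-1, l₀-1)`-optimal weights up to `O(h^{2r-1})`, and the remaining
weights are `O(h^{2r-1})`. -/
theorem weights_right_discontinuity (r : ℕ) (hr : 2 ≤ r) (l₀ : ℕ) (hl₀1 : 1 ≤ l₀)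
    (hl₀2 : l₀ ≤ r - 1) (L m M₀ : ℝ) (hL : 0 ≤ L) (hm : 0 < m) (hmM : m ≤ M₀) :
    ∃ M > 0, ∃ h₀ > 0, ∀ h : ℝ, 0 < h → h < h₀ → ∀ x₀ : ℝ, ∀ j : ℤ, ∀ f : ℝ → ℝ,
      m ≤ |f (nd h x₀ (j + l₀)) - f (nd h x₀ (j + l₀ - 1))| →
      |f (nd h x₀ (j + l₀)) - f (nd h x₀ (j + l₀ - 1))| ≤ M₀ →
      (∀ ξ : ℤ, ξ ≠ (l₀ : ℤ) → -(r : ℤ) + 1 ≤ ξ → ξ ≤ (r : ℤ) - 1 →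
        |f (nd h x₀ (j + ξ)) - f (nd h x₀ (j + ξ - 1))| ≤ L * h) →
      (∀ k : ℕ, k ≤ l₀ - 1 →
        |omegaW h x₀ j r f k - C1 r l₀ k| ≤ M * h ^ (2 * r - 1)) ∧
      (∀ k : ℕ, l₀ ≤ k → k ≤ r - 1 →
        0 ≤ omegaW h x₀ j r f k ∧ omegaW h x₀ j r f k ≤ M * h ^ (2 * r - 1)) :=
  weights_right_discontinuity_general r l₀ hl₀1 hl₀2 L m M₀ hm
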